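/- Let (V_j)_{j≥0} be Banach spaces and T_j : V_j → V_{j+1} bounded linear, T^n := T_{n-1} ∘ ⋯ ∘ T_0. Suppose for some m ≥ 1 there are reals l̄ > l̲ such that: (a) lim_n (1/n) log D_m(T^n) = m·l̄, (b) lim_n (1/n) log D_{m+1}(T^n) ≤ m·l̄ + l̲, and for each n there are unit vectors e^1_n,…,e^m_n in V_0 with Vol(T^n e^1_n,…,T^n e^m_n) ≥ (1/2) D_m(T^n). Let E_n := span{e^1_n,…,e^m_n}, E²_n := T^n E_n, choose a closed complement F²_n of E²_n in V_n with ‖π_{E²_n ∥ F²_n}‖ ≤ √m, and set F_n := (T^n)^{-1}(F²_n). Then for every unit vector v ∈ F_n, ‖T^n v‖ ≤ 2(√m + 1) D_{m+1}(T^n) / D_m(T^n). -/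

import Mathlib

/-!
Write `w = T^n v` and `E²_n = span (T^n e_n)`. Since `π_n` fixes `E²_n` and kills `w`, every
`u ∈ E²_n` satisfies `‖u‖ = ‖π_n (u - w)‖ ≤ √m ‖u - w‖`, so `‖w‖ ≤ (√m + 1) d(w, E²_n)`.
Appending `v` to `e_n` gives a unit `(m+1)`-family whose image has volume
`Vol(T^n e_n) · d(w, E²_n) ≥ ½ D_m(T^n) · ‖w‖ / (√m + 1)`, and this volume is at most
`D_{m+1}(T^n)`.

The case `D_m(T^n) = 0` is ruled out by the growth hypotheses: vanishing volumes stay zero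
under further maps and for `m + 1` vectors, which forces `m l̄ = 0` and `0 ≤ l̲ < l̄ = 0`.
-/

/-- `Vol(x_1,…,x_k) = ‖x_1‖ ∏_{i≥2} d(x_i, span{x_j : j < i})`; note that the distance of
`x 0` to the span of the empty family is `‖x 0‖`. -/
noncomputable def Vol {Y : Type*} [NormedAddCommGroup Y] [NormedSpace ℝ Y]
    {k : ℕ} (x : Fin k → Y) : ℝ :=
  ∏ i : Fin k, Metric.infDist (x i) (Submodule.span ℝ (x '' {j | j < i}) : Set Y)

/-- `D_k(T) = sup { Vol(Tx_1,…,Tx_k) : ‖x_i‖ = 1 }`. -/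
noncomputable def Dk {X Y : Type*} [NormedAddCommGroup X] [NormedSpace ℝ X]
    [NormedAddCommGroup Y] [NormedSpace ℝ Y] (k : ℕ) (T : X →L[ℝ] Y) : ℝ :=
  sSup {v : ℝ | ∃ x : Fin k → X, (∀ i, ‖x i‖ = 1) ∧ v = Vol (fun i => T (x i))}

open Filter

open Metric

theorem Continuous.infDist_image_eq_zero {α β : Type*} [PseudoMetricSpace α]
    [PseudoMetricSpace β] {f : α → β} (hf : Continuous f) {x : α} {s : Set α}
    (hs : s.Nonempty) (h : infDist x s = 0) : infDist (f x) (f '' s) = 0 :=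
  infDist_zero_of_mem_closure <|
    image_closure_subset_closure_image hf ⟨x, (mem_closure_iff_infDist_zero hs).2 h, rfl⟩

section Volume

variable {X Y Z : Type*} [NormedAddCommGroup X] [NormedSpace ℝ X]
  [NormedAddCommGroup Y] [NormedSpace ℝ Y] [NormedAddCommGroup Z] [NormedSpace ℝ Z]

theorem vol_nonneg {k : ℕ} (x : Fin k → Y) : 0 ≤ Vol x :=
  Finset.prod_nonneg fun _ _ => infDist_nonneg

theorem vol_le_prod_norm {k : ℕ} (x : Fin k → Y) : Vol x ≤ ∏ i, ‖x i‖ :=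
  Finset.prod_le_prod (fun _ _ => infDist_nonneg) fun i _ => by
    simpa using infDist_le_dist_of_mem (Submodule.span ℝ (x '' {j | j < i})).zero_mem

theorem vol_snoc {k : ℕ} (x : Fin k → Y) (y : Y) :
    Vol (Fin.snoc x y : Fin (k + 1) → Y) =
      Vol x * infDist y (Submodule.span ℝ (Set.range x) : Set Y) := by
  have hlt (i : Fin (k + 1)) : (Fin.snoc x y : Fin (k + 1) → Y) '' {j | j < i} =
      x '' {j | j.castSucc < i} := by
    ext z
    constructor
    · rintro ⟨j, hj, rfl⟩
      obtain ⟨j, rfl⟩ := Fin.exists_castSucc_eq.2 (hj.trans_le (Fin.le_last i)).ne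
      exact ⟨j, hj, by simp⟩
    · rintro ⟨j, hj, rfl⟩
      exact ⟨j.castSucc, hj, by simp⟩
  simp only [Vol, Fin.prod_univ_castSucc, Fin.snoc_castSucc, Fin.snoc_last, hlt,
    Fin.castSucc_lt_castSucc_iff, Fin.castSucc_lt_last, Set.ofPred_true, Set.image_univ]

theorem vol_map_eq_zero {k : ℕ} (A : Y →L[ℝ] Z) {y : Fin k → Y} (h : Vol y = 0) :
    Vol (fun i => A (y i)) = 0 := by
  obtain ⟨i, -, hi⟩ := Finset.prod_eq_zero_iff.1 h
  refine Finset.prod_eq_zero (Finset.mem_univ i) (le_antisymm ?_ infDist_nonneg)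
  have hspan : A '' (Submodule.span ℝ (y '' {j | j < i}) : Set Y) =
      Submodule.span ℝ ((fun i => A (y i)) '' {j | j < i}) := by
    simpa only [Set.image_image, Submodule.map_coe, ContinuousLinearMap.coe_coe] using
      congrArg SetLike.coe (Submodule.span_image (A : Y →ₗ[ℝ] Z) (s := y '' {j | j < i})).symm
  rw [← A.continuous.infDist_image_eq_zero ⟨0, Submodule.zero_mem _⟩ hi, hspan]

theorem bddAbove_vol_of_norm_eq_one (k : ℕ) (T : X →L[ℝ] Y) :
    BddAbove {v : ℝ | ∃ x : Fin k → X, (∀ i, ‖x i‖ = 1) ∧ v = Vol (fun i => T (x i))} := by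
  refine ⟨‖T‖ ^ k, ?_⟩
  rintro _ ⟨x, hx, rfl⟩
  calc Vol (fun i => T (x i)) ≤ ∏ i, ‖T (x i)‖ := vol_le_prod_norm _
    _ ≤ ∏ _i : Fin k, ‖T‖ := Finset.prod_le_prod (fun _ _ => norm_nonneg _) fun i _ => by
        simpa [hx i] using T.le_opNorm (x i)
    _ = ‖T‖ ^ k := by simp

theorem vol_le_dk {k : ℕ} (T : X →L[ℝ] Y) {x : Fin k → X} (hx : ∀ i, ‖x i‖ = 1) :
    Vol (fun i => T (x i)) ≤ Dk k T :=
  le_csSup (bddAbove_vol_of_norm_eq_one k T) ⟨x, hx, rfl⟩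

theorem dk_nonneg (k : ℕ) (T : X →L[ℝ] Y) : 0 ≤ Dk k T :=
  Real.sSup_nonneg <| by
    rintro _ ⟨x, -, rfl⟩
    exact vol_nonneg _

theorem dk_eq_zero_iff {k : ℕ} {T : X →L[ℝ] Y} :
    Dk k T = 0 ↔ ∀ x : Fin k → X, (∀ i, ‖x i‖ = 1) → Vol (fun i => T (x i)) = 0 := by
  refine ⟨fun h x hx => le_antisymm (h ▸ vol_le_dk T hx) (vol_nonneg _), fun h => ?_⟩
  refine le_antisymm (Real.sSup_nonpos ?_) (dk_nonneg k T)
  rintro _ ⟨x, hx, rfl⟩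
  exact (h x hx).le

theorem dk_comp_eq_zero {k : ℕ} (A : Y →L[ℝ] Z) {T : X →L[ℝ] Y} (h : Dk k T = 0) :
    Dk k (A.comp T) = 0 :=
  dk_eq_zero_iff.2 fun x hx => vol_map_eq_zero A (dk_eq_zero_iff.1 h x hx)

theorem dk_succ_eq_zero {k : ℕ} {T : X →L[ℝ] Y} (h : Dk k T = 0) : Dk (k + 1) T = 0 := by
  refine dk_eq_zero_iff.2 fun x hx => ?_
  rw [← Fin.snoc_init_self fun i => T (x i), vol_snoc]
  exact mul_eq_zero_of_left (dk_eq_zero_iff.1 h (Fin.init x) fun i => hx _) _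

theorem vol_mul_infDist_le_dk_succ {k : ℕ} (T : X →L[ℝ] Y) {x : Fin k → X}
    (hx : ∀ i, ‖x i‖ = 1) {v : X} (hv : ‖v‖ = 1) :
    Vol (fun i => T (x i)) * infDist (T v) (Submodule.span ℝ (Set.range fun i => T (x i))) ≤
      Dk (k + 1) T := by
  have hunit : ∀ i, ‖(Fin.snoc x v : Fin (k + 1) → X) i‖ = 1 :=
    Fin.lastCases (by simpa using hv) fun i => by simpa using hx i
  simpa [← vol_snoc, ← Function.comp_def, Fin.comp_snoc] using vol_le_dk T hunit

theorem norm_le_mul_infDist_of_ker_proj (P : Y →L[ℝ] Y) (p : Submodule ℝ Y)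
    (hP : ∀ u ∈ p, P u = u) {w : Y} (hw : P w = 0) :
    ‖w‖ ≤ (‖P‖ + 1) * infDist w p := by
  have hpos : 0 < ‖P‖ + 1 := by positivity
  rw [← div_le_iff₀' hpos, le_infDist ⟨0, p.zero_mem⟩]
  intro u hu
  rw [div_le_iff₀' hpos, dist_eq_norm]
  calc ‖w‖ ≤ ‖w - u‖ + ‖u‖ := by simpa using norm_add_le (w - u) u
    _ = ‖w - u‖ + ‖P (w - u)‖ := by rw [map_sub, hw, hP u hu, zero_sub, norm_neg]
    _ ≤ ‖w - u‖ + ‖P‖ * ‖w - u‖ := by gcongr; exact P.le_opNorm _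
    _ = (‖P‖ + 1) * ‖w - u‖ := by ring

theorem eventually_dk_eq_zero {V : ℕ → Type*} [∀ j, NormedAddCommGroup (V j)]
    [∀ j, NormedSpace ℝ (V j)]
    (T : ∀ j, V j →L[ℝ] V (j + 1)) {Tpow : ∀ n, X →L[ℝ] V n}
    (hTpowS : ∀ n, Tpow (n + 1) = (T n).comp (Tpow n)) {k n : ℕ} (h : Dk k (Tpow n) = 0) :
    ∀ᶠ N in atTop, Dk k (Tpow N) = 0 := by
  filter_upwards [eventually_ge_atTop n] with N hN
  induction N, hN using Nat.le_induction with
  | base => exact h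
  | succ N _ ih => exact hTpowS N ▸ dk_comp_eq_zero (T N) ih

end Volume

/-- With the convention `Real.log 0 = 0`, an eventually vanishing sequence has exponential
growth rate `0` (rather than `-∞`). -/
theorem growth_rate_eq_zero_of_eventually_eq_zero {f : ℕ → ℝ} {c : ℝ}
    (h : Tendsto (fun n : ℕ => 1 / (n : ℝ) * Real.log (f n)) atTop (nhds c))
    (hf : ∀ᶠ n in atTop, f n = 0) : c = 0 :=
  tendsto_nhds_unique h <| tendsto_const_nhds.congr' <| hf.mono fun n hn => by simp [hn]

theorem stmt19_general (V : ℕ → Type*) [∀ j, NormedAddCommGroup (V j)] [∀ j, NormedSpace ℝ (V j)]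
    (T : ∀ j, V j →L[ℝ] V (j + 1))
    (Tpow : ∀ n, V 0 →L[ℝ] V n)
    (hTpowS : ∀ n, Tpow (n + 1) = (T n).comp (Tpow n))
    (m : ℕ) (hm : 1 ≤ m) (lbar lunder : ℝ) (hl : lunder < lbar)
    (ha : Tendsto (fun n : ℕ => (1 / (n : ℝ)) * Real.log (Dk m (Tpow n)))
      atTop (nhds (m * lbar)))
    (hb : ∃ L : ℝ, L ≤ m * lbar + lunder ∧
      Tendsto (fun n : ℕ => (1 / (n : ℝ)) * Real.log (Dk (m + 1) (Tpow n))) atTop (nhds L))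
    (e : ℕ → Fin m → V 0) (he1 : ∀ n i, ‖e n i‖ = 1)
    (hevol : ∀ n, (1 / 2) * Dk m (Tpow n) ≤ Vol (fun i => Tpow n (e n i)))
    (π : ∀ n, V n →L[ℝ] V n)
    (hπid : ∀ n, ∀ w ∈ Submodule.span ℝ (Set.range (fun i => Tpow n (e n i))), π n w = w)
    (hπnorm : ∀ n, ‖π n‖ ≤ Real.sqrt m) :
    ∀ n (v : V 0), ‖v‖ = 1 → π n (Tpow n v) = 0 →
      ‖Tpow n v‖ ≤ 2 * (Real.sqrt m + 1) * Dk (m + 1) (Tpow n) / Dk m (Tpow n) := by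
  intro n v hv hπv
  have hDpos : 0 < Dk m (Tpow n) := by
    refine (dk_nonneg m _).lt_of_ne' fun hD => ?_
    obtain ⟨L, hL, hbL⟩ := hb
    have hzero := eventually_dk_eq_zero T hTpowS hD
    have hmlbar := growth_rate_eq_zero_of_eventually_eq_zero ha hzero
    have hL0 := growth_rate_eq_zero_of_eventually_eq_zero hbL
      (hzero.mono fun _ => dk_succ_eq_zero)
    have hlbar : lbar = 0 :=
      (mul_eq_zero.1 hmlbar).resolve_left (Nat.cast_ne_zero.2 (Nat.one_le_iff_ne_zero.1 hm))
    linarith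
  set d := infDist (Tpow n v) (Submodule.span ℝ (Set.range fun i => Tpow n (e n i)))
  set vol := Vol fun i => Tpow n (e n i)
  have hdist : ‖Tpow n v‖ ≤ (Real.sqrt m + 1) * d :=
    (norm_le_mul_infDist_of_ker_proj (π n) _ (hπid n) hπv).trans
      (mul_le_mul_of_nonneg_right (by linarith [hπnorm n]) infDist_nonneg)
  have hvol : vol * d ≤ Dk (m + 1) (Tpow n) := vol_mul_infDist_le_dk_succ (Tpow n) (he1 n) hv
  rw [le_div_iff₀ hDpos]
  calc ‖Tpow n v‖ * Dk m (Tpow n) ≤ ((Real.sqrt m + 1) * d) * (2 * vol) :=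
        mul_le_mul hdist (by linarith [hevol n]) (dk_nonneg _ _)
          (mul_nonneg (by positivity) infDist_nonneg)
    _ = 2 * (Real.sqrt m + 1) * (vol * d) := by ring
    _ ≤ 2 * (Real.sqrt m + 1) * Dk (m + 1) (Tpow n) := by gcongr

/-- in the setting of the pathwise MET, with `T^n = T_{n-1} ∘ ⋯ ∘ T_0`,
`lim (1/n) log D_m(T^n) = m·l̄`, `lim (1/n) log D_{m+1}(T^n) ≤ m·l̄ + l̲`, unit vectors
`e¹_n,…,eᵐ_n` almost attaining `D_m(T^n)`, and a projection `π n` onto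
`E²_n = T^n(span e_n)` of norm `≤ √m` (whose kernel `F²_n` is a closed complement, with
`F_n = (T^n)^{-1}(F²_n)`), every unit vector `v ∈ F_n` satisfies
`‖T^n v‖ ≤ 2(√m + 1) D_{m+1}(T^n)/D_m(T^n)`. -/
theorem stmt19 (V : ℕ → Type*) [∀ j, NormedAddCommGroup (V j)] [∀ j, NormedSpace ℝ (V j)]
    [∀ j, CompleteSpace (V j)]
    (T : ∀ j, V j →L[ℝ] V (j + 1))
    (Tpow : ∀ n, V 0 →L[ℝ] V n)
    (hTpow0 : Tpow 0 = ContinuousLinearMap.id ℝ (V 0))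
    (hTpowS : ∀ n, Tpow (n + 1) = (T n).comp (Tpow n))
    (m : ℕ) (hm : 1 ≤ m) (lbar lunder : ℝ) (hl : lunder < lbar)
    (ha : Tendsto (fun n : ℕ => (1 / (n : ℝ)) * Real.log (Dk m (Tpow n)))
      atTop (nhds (m * lbar)))
    (hb : ∃ L : ℝ, L ≤ m * lbar + lunder ∧
      Tendsto (fun n : ℕ => (1 / (n : ℝ)) * Real.log (Dk (m + 1) (Tpow n))) atTop (nhds L))
    (e : ℕ → Fin m → V 0) (he1 : ∀ n i, ‖e n i‖ = 1)
    (hevol : ∀ n, (1 / 2) * Dk m (Tpow n) ≤ Vol (fun i => Tpow n (e n i)))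
    (π : ∀ n, V n →L[ℝ] V n)
    (hπmem : ∀ n w, π n w ∈ Submodule.span ℝ (Set.range (fun i => Tpow n (e n i))))
    (hπid : ∀ n, ∀ w ∈ Submodule.span ℝ (Set.range (fun i => Tpow n (e n i))), π n w = w)
    (hπnorm : ∀ n, ‖π n‖ ≤ Real.sqrt m) :
    ∀ n (v : V 0), ‖v‖ = 1 → π n (Tpow n v) = 0 →
      ‖Tpow n v‖ ≤ 2 * (Real.sqrt m + 1) * Dk (m + 1) (Tpow n) / Dk m (Tpow n) :=
  stmt19_general V T Tpow hTpowS m hm lbar lunder hl ha hb e he1 hevol π hπid hπnorm
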